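/- Let X, Y ∈ {0,1}^n, let N₀ be the total number of zeros in X and Y together, let L be the LCS length of X and Y, and suppose L ≥ N₀/2 + a for some real a > 0. Then every optimal alignment v = (v_1,…,v_k) ∈ V satisfies k ≥ a and |v_1| + ⋯ + |v_k| ≤ 2k. -/

import Mathlib

open scoped BigOperators
open Classical

noncomputable section

/-- Length of a longest common subsequence of two boolean lists. -/
def lcsLen (x y : List Bool) : ℕ :=
  sSup {k : ℕ | ∃ z : List Bool, z.length = k ∧ z.Sublist x ∧ z.Sublist y}

/-- Number of zeros of x among positions a, a+1, …, b. -/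
def zeroCount (x : ℕ → Bool) (a b : ℕ) : ℕ :=
  ((Finset.Icc a b).filter fun i => x i = false).card

/-- The pair (s, t) is a candidate next pair of matched ones after (p, q), for the
zero-difference u. -/
def StepProp (x y : ℕ → Bool) (n : ℕ) (u : ℤ) (p q s t : ℕ) : Prop :=
  p < s ∧ q < t ∧ s ≤ n ∧ t ≤ n ∧ x s = true ∧ y t = true ∧
    (zeroCount x (p + 1) s : ℤ) - (zeroCount y (q + 1) t : ℤ) = u

/-- π, ν realize the alignment associated with the vector v. -/
def IsAlignment (x y : ℕ → Bool) (n : ℕ) (v : List ℤ) (piF nuF : ℕ → ℕ) : Prop :=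
  piF 0 = 0 ∧ nuF 0 = 0 ∧
    ∀ i : ℕ, ∀ hi : i < v.length,
      StepProp x y n (v.get ⟨i, hi⟩) (piF i) (nuF i) (piF (i + 1)) (nuF (i + 1)) ∧
      ∀ s t : ℕ, StepProp x y n (v.get ⟨i, hi⟩) (piF i) (nuF i) s t →
        piF (i + 1) < s ∨ (piF (i + 1) = s ∧ nuF (i + 1) ≤ t)

/-- The score of the alignment v (realized by π, ν). -/
def score (x y : ℕ → Bool) (n : ℕ) (v : List ℤ) (piF nuF : ℕ → ℕ) : ℕ :=
  v.length +
    (∑ i ∈ Finset.range v.length,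
      min (zeroCount x (piF i + 1) (piF (i + 1))) (zeroCount y (nuF i + 1) (nuF (i + 1)))) +
    min (zeroCount x (piF v.length + 1) n) (zeroCount y (nuF v.length + 1) n)

/-- LCS length of the strings (x 1, …, x n) and (y 1, …, y n). -/
def lcsN (x y : ℕ → Bool) (n : ℕ) : ℕ :=
  lcsLen (List.ofFn fun i : Fin n => x (i.val + 1)) (List.ofFn fun i : Fin n => y (i.val + 1))

/-!
On the `i`-th block of an alignment the zero counts of `X` and `Y` differ by `vᵢ`, so twice
their minimum is their sum minus `|vᵢ|`; on the tail twice the minimum is at most the sum.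
Since the blocks and the tail partition both strings, `2 S_v + ∑ |vᵢ| ≤ 2k + N₀`. For an
optimal `v`, `S_v = L ≥ N₀/2 + a`, whence `2a + ∑ |vᵢ| ≤ 2k`, which gives both claims.
-/

theorem zeroCount_add (x : ℕ → Bool) {a b c : ℕ} (hab : a ≤ b + 1) (hbc : b ≤ c) :
    zeroCount x a b + zeroCount x (b + 1) c = zeroCount x a c := by
  unfold zeroCount
  rw [← Finset.card_union_of_disjoint, ← Finset.filter_union]
  · congr 2
    ext i
    simp only [Finset.mem_union, Finset.mem_Icc]
    omega
  · simp only [Finset.disjoint_left, Finset.mem_filter, Finset.mem_Icc]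
    omega

theorem sum_zeroCount_blocks_add_tail (x : ℕ → Bool) (p : ℕ → ℕ) (n : ℕ) :
    ∀ k, (∀ i < k, p i ≤ p (i + 1) ∧ p (i + 1) ≤ n) →
      ∑ i ∈ Finset.range k, zeroCount x (p i + 1) (p (i + 1)) + zeroCount x (p k + 1) n =
        zeroCount x (p 0 + 1) n
  | 0, _ => by simp
  | k + 1, hp => by
    obtain ⟨hmono, hle⟩ := hp k k.lt_succ_self
    rw [Finset.sum_range_succ, add_assoc, zeroCount_add x (by omega) hle]
    exact sum_zeroCount_blocks_add_tail x p n k fun i hi => hp i (by omega)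

theorem natAbs_sub_add_two_mul_min (a b : ℕ) :
    ((a : ℤ) - b).natAbs + 2 * min a b = a + b := by
  omega

namespace IsAlignment

variable {x y : ℕ → Bool} {n : ℕ} {v : List ℤ} {piF nuF : ℕ → ℕ}

theorem two_mul_score_add_sum_natAbs_le (hv : IsAlignment x y n v piF nuF) :
    2 * score x y n v piF nuF + (v.map Int.natAbs).sum ≤
      2 * v.length + (zeroCount x 1 n + zeroCount y 1 n) := by
  obtain ⟨hpi0, hnu0, hstep⟩ := hv
  have hx := sum_zeroCount_blocks_add_tail x piF n v.length fun i hi => by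
    obtain ⟨hlt, -, hle, -⟩ := (hstep i hi).1
    exact ⟨hlt.le, hle⟩
  have hy := sum_zeroCount_blocks_add_tail y nuF n v.length fun i hi => by
    obtain ⟨-, hlt, -, hle, -⟩ := (hstep i hi).1
    exact ⟨hlt.le, hle⟩
  rw [hpi0, zero_add] at hx
  rw [hnu0, zero_add] at hy
  have hblocks : (v.map Int.natAbs).sum +
      2 * ∑ i ∈ Finset.range v.length,
        min (zeroCount x (piF i + 1) (piF (i + 1))) (zeroCount y (nuF i + 1) (nuF (i + 1))) =
      ∑ i ∈ Finset.range v.length, zeroCount x (piF i + 1) (piF (i + 1)) +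
        ∑ i ∈ Finset.range v.length, zeroCount y (nuF i + 1) (nuF (i + 1)) := by
    simp only [← Fin.sum_univ_fun_getElem, ← Fin.sum_univ_eq_sum_range, Finset.mul_sum,
      ← Finset.sum_add_distrib]
    refine Finset.sum_congr rfl fun i _ => ?_
    obtain ⟨-, -, -, -, -, -, hdiff⟩ := (hstep i i.2).1
    rw [← List.get_eq_getElem, ← hdiff, natAbs_sub_add_two_mul_min]
  unfold score
  omega

end IsAlignment

/-- If L ≥ N₀/2 + a with a > 0, where N₀ is the total number of zeros in X and Y, then every
optimal alignment v = (v₁,…,v_k) satisfies k ≥ a and |v₁| + ⋯ + |v_k| ≤ 2k. -/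
theorem stmt8 (n : ℕ) (x y : ℕ → Bool) (a : ℝ) (ha : 0 < a)
    (hL : ((zeroCount x 1 n + zeroCount y 1 n : ℕ) : ℝ) / 2 + a ≤ (lcsN x y n : ℝ))
    (v : List ℤ) (piF nuF : ℕ → ℕ) (hv : IsAlignment x y n v piF nuF)
    (hopt : score x y n v piF nuF = lcsN x y n) :
    a ≤ (v.length : ℝ) ∧ (v.map Int.natAbs).sum ≤ 2 * v.length := by
  have hkey : (2 * lcsN x y n + (v.map Int.natAbs).sum : ℝ) ≤
      2 * v.length + ((zeroCount x 1 n + zeroCount y 1 n : ℕ) : ℝ) := by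
    exact_mod_cast hopt ▸ hv.two_mul_score_add_sum_natAbs_le
  have hsum_nonneg : (0 : ℝ) ≤ (v.map Int.natAbs).sum := Nat.cast_nonneg _
  refine ⟨by linarith, ?_⟩
  exact_mod_cast (by linarith : ((v.map Int.natAbs).sum : ℝ) ≤ 2 * v.length)
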